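/- The sum of two weakly solvable ideals of a finite-dimensional Bol algebra with zero bilinear product (i.e., a Lie triple system) is weakly solvable; hence a maximal weakly solvable ideal (the weak radical) exists and is unique. -/
import Mathlib


variable {F : Type*} [Field F] [CharZero F] {V : Type*} [AddCommGroup V] [Module F V]

/-- A Bol algebra structure: bilinear product `mul`, trilinear product `tri`. -/
def IsBolAlgebra (mul : V →ₗ[F] V →ₗ[F] V) (tri : V →ₗ[F] V →ₗ[F] V →ₗ[F] V) : Prop :=
  (∀ x : V, mul x x = 0) ∧
  (∀ x y z : V, tri x y z + tri y z x + tri z x y = 0) ∧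
  (∀ x y z w : V,
    mul (tri x y z) w - mul (tri x y w) z + tri z w (mul x y)
      - tri x y (mul z w) + mul (mul x y) (mul z w) = 0) ∧
  (∀ x y z w u : V,
    tri x y (tri z w u)
      = tri (tri x y z) w u + tri z (tri x y w) u + tri z w (tri x y u))

/-- Span of all trilinear products `(a,b,c)` with `a ∈ A`, `b ∈ B`, `c ∈ C`. -/
def triProd (tri : V →ₗ[F] V →ₗ[F] V →ₗ[F] V) (A B C : Submodule F V) : Submodule F V :=
  Submodule.span F {x : V | ∃ a ∈ A, ∃ b ∈ B, ∃ c ∈ C, tri a b c = x}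

/-- The chain `I⁽⁰⁾ = I`, `I⁽ᵏ⁺¹⁾ = (V, I⁽ᵏ⁾, I⁽ᵏ⁾)`. -/
def bolChain (tri : V →ₗ[F] V →ₗ[F] V →ₗ[F] V) (I : Submodule F V) : ℕ → Submodule F V
  | 0 => I
  | k + 1 => triProd tri ⊤ (bolChain tri I k) (bolChain tri I k)

/-- An ideal of a Bol algebra. -/
def IsBolIdeal (mul : V →ₗ[F] V →ₗ[F] V) (tri : V →ₗ[F] V →ₗ[F] V →ₗ[F] V)
    (I : Submodule F V) : Prop :=
  ∀ v w : V, ∀ i ∈ I,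
    mul v i ∈ I ∧ mul i v ∈ I ∧ tri i v w ∈ I ∧ tri v i w ∈ I ∧ tri v w i ∈ I

/-- Weak solvability of an ideal. -/
def IsWeaklySolvable (tri : V →ₗ[F] V →ₗ[F] V →ₗ[F] V) (I : Submodule F V) : Prop :=
  ∃ k : ℕ, bolChain tri I k = ⊥

/-- The weak radical: a maximal weakly solvable ideal. -/
def IsWeakRadical (mul : V →ₗ[F] V →ₗ[F] V) (tri : V →ₗ[F] V →ₗ[F] V →ₗ[F] V)
    (R : Submodule F V) : Prop :=
  IsBolIdeal mul tri R ∧ IsWeaklySolvable tri R ∧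
    ∀ J : Submodule F V, IsBolIdeal mul tri J → IsWeaklySolvable tri J → J ≤ R

/-- A Bol subalgebra. -/
def IsBolSubalgebra (mul : V →ₗ[F] V →ₗ[F] V) (tri : V →ₗ[F] V →ₗ[F] V →ₗ[F] V)
    (S : Submodule F V) : Prop :=
  ∀ a ∈ S, ∀ b ∈ S, ∀ c ∈ S, mul a b ∈ S ∧ tri a b c ∈ S

lemma triProd_mono (tri : V →ₗ[F] V →ₗ[F] V →ₗ[F] V) {A A' B B' C C' : Submodule F V}
    (hA : A ≤ A') (hB : B ≤ B') (hC : C ≤ C') :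
    triProd tri A B C ≤ triProd tri A' B' C' := by
  apply Submodule.span_mono
  rintro x ⟨a, ha, b, hb, c, hc, rfl⟩
  exact ⟨a, hA ha, b, hB hb, c, hC hc, rfl⟩

lemma bolChain_mono (tri : V →ₗ[F] V →ₗ[F] V →ₗ[F] V) {I J : Submodule F V}
    (h : I ≤ J) : ∀ k, bolChain tri I k ≤ bolChain tri J k := by
  intro k
  induction k with
  | zero => exact h
  | succ k ih => exact triProd_mono tri le_rfl ih ih

lemma bolChain_add (tri : V →ₗ[F] V →ₗ[F] V →ₗ[F] V) (I : Submodule F V) (k m : ℕ) :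
    bolChain tri I (k + m) = bolChain tri (bolChain tri I k) m := by
  induction m with
  | zero => rfl
  | succ m ih =>
      show triProd tri ⊤ (bolChain tri I (k + m)) (bolChain tri I (k + m))
          = triProd tri ⊤ (bolChain tri (bolChain tri I k) m) (bolChain tri (bolChain tri I k) m)
      rw [ih]

lemma triProd_sup_le {tri : V →ₗ[F] V →ₗ[F] V →ₗ[F] V} {J : Submodule F V}
    (hJ : IsBolIdeal (0 : V →ₗ[F] V →ₗ[F] V) tri J) (X : Submodule F V) :
    triProd tri ⊤ (X ⊔ J) (X ⊔ J) ≤ triProd tri ⊤ X X ⊔ J := by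
  rw [triProd, Submodule.span_le]
  rintro x ⟨a, -, b, hb, c, hc, rfl⟩
  obtain ⟨bx, hbx, bj, hbj, rfl⟩ := Submodule.mem_sup.mp hb
  obtain ⟨cx, hcx, cj, hcj, rfl⟩ := Submodule.mem_sup.mp hc
  have : tri a (bx + bj) (cx + cj)
      = tri a bx cx + (tri a bx cj + tri a bj (cx + cj)) := by
    simp only [map_add, LinearMap.add_apply]; abel
  rw [this]
  refine Submodule.add_mem _ (Submodule.mem_sup_left ?_) (Submodule.mem_sup_right ?_)
  · exact Submodule.subset_span ⟨a, trivial, bx, hbx, cx, hcx, rfl⟩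
  · exact J.add_mem (hJ a bx cj hcj).2.2.2.2 (hJ a (cx + cj) bj hbj).2.2.2.1

lemma bolChain_sup_le {tri : V →ₗ[F] V →ₗ[F] V →ₗ[F] V} {I J : Submodule F V}
    (hJ : IsBolIdeal (0 : V →ₗ[F] V →ₗ[F] V) tri J) :
    ∀ k, bolChain tri (I ⊔ J) k ≤ bolChain tri I k ⊔ J := by
  intro k
  induction k with
  | zero => exact le_rfl
  | succ k ih =>
      calc bolChain tri (I ⊔ J) (k + 1)
          ≤ triProd tri ⊤ (bolChain tri I k ⊔ J) (bolChain tri I k ⊔ J) :=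
            triProd_mono tri le_rfl ih ih
        _ ≤ bolChain tri I (k + 1) ⊔ J := triProd_sup_le hJ _

lemma sup_weaklySolvable {tri : V →ₗ[F] V →ₗ[F] V →ₗ[F] V} {I J : Submodule F V}
    (hJ : IsBolIdeal (0 : V →ₗ[F] V →ₗ[F] V) tri J)
    (hIs : IsWeaklySolvable tri I) (hJs : IsWeaklySolvable tri J) :
    IsWeaklySolvable tri (I ⊔ J) := by
  obtain ⟨k, hk⟩ := hIs
  obtain ⟨m, hm⟩ := hJs
  refine ⟨k + m, ?_⟩
  have h1 : bolChain tri (I ⊔ J) k ≤ J := by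
    have := bolChain_sup_le (I := I) hJ k
    rwa [hk, bot_sup_eq] at this
  rw [bolChain_add]
  exact le_bot_iff.mp (hm ▸ bolChain_mono tri h1 m)

lemma sup_isBolIdeal {mul : V →ₗ[F] V →ₗ[F] V} {tri : V →ₗ[F] V →ₗ[F] V →ₗ[F] V}
    {I J : Submodule F V} (hI : IsBolIdeal mul tri I) (hJ : IsBolIdeal mul tri J) :
    IsBolIdeal mul tri (I ⊔ J) := by
  intro v w i hi
  obtain ⟨a, ha, b, hb, rfl⟩ := Submodule.mem_sup.mp hi
  have HA := hI v w a ha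
  have HB := hJ v w b hb
  refine ⟨?_, ?_, ?_, ?_, ?_⟩
  · rw [map_add]
    exact (I ⊔ J).add_mem (Submodule.mem_sup_left HA.1) (Submodule.mem_sup_right HB.1)
  · rw [map_add, LinearMap.add_apply]
    exact (I ⊔ J).add_mem (Submodule.mem_sup_left HA.2.1) (Submodule.mem_sup_right HB.2.1)
  · rw [map_add, LinearMap.add_apply, LinearMap.add_apply]
    exact (I ⊔ J).add_mem (Submodule.mem_sup_left HA.2.2.1) (Submodule.mem_sup_right HB.2.2.1)
  · rw [map_add, LinearMap.add_apply]
    exact (I ⊔ J).add_mem (Submodule.mem_sup_left HA.2.2.2.1) (Submodule.mem_sup_right HB.2.2.2.1)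
  · rw [map_add]
    exact (I ⊔ J).add_mem (Submodule.mem_sup_left HA.2.2.2.2) (Submodule.mem_sup_right HB.2.2.2.2)

/-- in a finite-dimensional Lie triple system (a Bol algebra with
zero bilinear product), the sum of two weakly solvable ideals is weakly solvable;
hence the weak radical exists and is unique. -/
theorem lts_radical_exists_unique [FiniteDimensional F V]
    (tri : V →ₗ[F] V →ₗ[F] V →ₗ[F] V)
    (hBol : IsBolAlgebra (0 : V →ₗ[F] V →ₗ[F] V) tri)
    (halt : ∀ ξ ζ : V, tri ξ ξ ζ = 0) :
    (∀ I J : Submodule F V,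
      IsBolIdeal (0 : V →ₗ[F] V →ₗ[F] V) tri I → IsBolIdeal (0 : V →ₗ[F] V →ₗ[F] V) tri J →
      IsWeaklySolvable tri I → IsWeaklySolvable tri J → IsWeaklySolvable tri (I ⊔ J)) ∧
    (∃! R : Submodule F V, IsWeakRadical (0 : V →ₗ[F] V →ₗ[F] V) tri R) := by
  have hsum : ∀ I J : Submodule F V,
      IsBolIdeal (0 : V →ₗ[F] V →ₗ[F] V) tri I → IsBolIdeal (0 : V →ₗ[F] V →ₗ[F] V) tri J →
      IsWeaklySolvable tri I → IsWeaklySolvable tri J → IsWeaklySolvable tri (I ⊔ J) :=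
    fun _ _ _ hJ hIs hJs => sup_weaklySolvable hJ hIs hJs
  refine ⟨hsum, ?_⟩
  set S : Set (Submodule F V) :=
    {I | IsBolIdeal (0 : V →ₗ[F] V →ₗ[F] V) tri I ∧ IsWeaklySolvable tri I} with hS
  have hbot : (⊥ : Submodule F V) ∈ S := by
    constructor
    · intro v w i hi
      obtain rfl := Submodule.mem_bot F |>.mp hi
      simp [Submodule.mem_bot]
    · exact ⟨0, rfl⟩
  obtain ⟨R, hR, hmax⟩ := set_has_maximal_iff_noetherian.mpr inferInstance S ⟨⊥, hbot⟩
  have hRtop : ∀ J : Submodule F V, IsBolIdeal (0 : V →ₗ[F] V →ₗ[F] V) tri J →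
      IsWeaklySolvable tri J → J ≤ R := by
    intro J hJid hJs
    have hRJ : R ⊔ J ∈ S := ⟨sup_isBolIdeal hR.1 hJid, hsum R J hR.1 hJid hR.2 hJs⟩
    have heq : R ⊔ J = R := by
      by_contra h
      exact hmax _ hRJ (lt_of_le_of_ne le_sup_left (Ne.symm h))
    exact le_sup_right.trans heq.le
  refine ⟨R, ⟨hR.1, hR.2, hRtop⟩, ?_⟩
  rintro R' ⟨h1, h2, h3⟩
  exact le_antisymm (hRtop R' h1 h2) (h3 R hR.1 hR.2)
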